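/- Let H be a finite dimensional complex vector space with finite decreasing filtration F and a (-1)^m-symmetric bilinear pairing S such that S(F^p H, F^q H) = 0 for p + q = m + 1 and the induced pairings Gr_F^p H × Gr_F^{m-p} H → ℂ are nondegenerate. Then there exist elements v_{p,i} ∈ F^p H (for each p and 1 ≤ i ≤ dim Gr_F^p H) whose classes form bases of the graded pieces Gr_F^p H, satisfying S(v_{p,i}, v_{q,j}) = ε_p δ_{p,m-q} δ_{i,j} with signs ε_p ∈ {±1}. -/

import Mathlib

open Module Submodule

/-!
The vectors are found one orthogonal block at a time. Let `W` be the right `S`-orthogonal of the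
vectors chosen so far and `t` the largest degree with `F^t ∩ W ≠ 0`. Projecting along the chosen
vectors (possible since they pair with their partners by `±1`) reduces the nondegeneracy of
`Gr^t × Gr^(m-t)` to `W`, so a nonzero `u ∈ F^t ∩ W` pairs nontrivially with some
`w ∈ F^(m-t) ∩ W`, and `t ≥ m - t` by maximality. If `t > m - t`, the vanishing of `S` on
`F^t × F^(m+1-t)` lets `u, w` be normalised to a hyperbolic pair; if `2t = m`, `S` is symmetric
and some `x ∈ F^t ∩ W` has `S(x, x) = 1`. Each block strictly shrinks `W`. Once `W` meets no
`F^p`, the projection shows that the vectors of degree `≥ p` span `F^p`, and pairing with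
partners shows that the classes of those of degree `p` are independent in `Gr^p`. Finally the
vectors of degrees `p` and `m - p` are numbered compatibly with the partner involution.
-/

theorem Antitone.exists_ne_bot_succ_eq_bot {α : Type*} [PartialOrder α] [OrderBot α] {G : ℤ → α}
    (hG : Antitone G) (hb : ∃ b, G b = ⊥) (hp : ∃ p, G p ≠ ⊥) :
    ∃ t, G t ≠ ⊥ ∧ G (t + 1) = ⊥ := by
  obtain ⟨b, hb⟩ := hb
  have hbdd : ∀ z, G z ≠ ⊥ → z ≤ b := fun z hz => by
    by_contra hzb
    exact hz (le_bot_iff.1 (hb ▸ hG (le_of_not_ge hzb)))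
  obtain ⟨t, ht, htmax⟩ := Int.exists_greatest_of_bdd ⟨b, hbdd⟩ hp
  exact ⟨t, ht, not_not.1 fun h => by linarith [htmax _ h]⟩

section FiberCode

variable {ι : Type*} [Fintype ι] {d : ι → ℤ} {σ : ι → ι} {m : ℤ}

theorem exists_fiber_code (hσ : Function.Involutive σ) (hd : ∀ i, d (σ i) = m - d i)
    (hfix : ∀ i, 2 * d i = m → σ i = i) :
    ∃ κ : ι → ℕ, (∀ i, κ (σ i) = κ i) ∧ (∀ i, κ i < Fintype.card {j // d j = d i}) ∧
      ∀ i j, d i = d j → κ i = κ j → i = j := by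
  classical
  let code (r : ι) : ℕ := Fintype.equivFin {j // d j = d r} ⟨r, rfl⟩
  have code_eq (r : ι) (p : ℤ) (h : d r = p) :
      code r = Fintype.equivFin {j // d j = p} ⟨r, h⟩ := by
    subst h; rfl
  have code_inj (r r' : ι) (h : d r = d r') (hc : code r = code r') : r = r' := by
    rw [code_eq r' (d r) h.symm] at hc
    exact congrArg Subtype.val ((Fintype.equivFin _).injective (Fin.ext hc))
  -- each `σ`-orbit is coded through its member of degree at least `m / 2`
  let up (i : ι) : ι := if m ≤ 2 * d i then i else σ i
  have up_dual (i : ι) : up (σ i) = up i := by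
    have := hd i
    by_cases h : m ≤ 2 * d i <;> by_cases h' : m ≤ 2 * d (σ i) <;>
      simp only [up, h, h', if_true, if_false, hσ i]
    · exact hfix i (by omega)
    all_goals omega
  have deg_up (i : ι) : d (up i) = if m ≤ 2 * d i then d i else m - d i := by
    by_cases h : m ≤ 2 * d i <;> simp [up, h, hd]
  have card_dual (p : ℤ) :
      Fintype.card {j // d j = m - p} = Fintype.card {j // d j = p} :=
    Fintype.card_congr
      { toFun j := ⟨σ j, by rw [hd, j.2]; ring⟩
        invFun j := ⟨σ j, by rw [hd, j.2]⟩
        left_inv j := Subtype.ext (hσ j)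
        right_inv j := Subtype.ext (hσ j) }
  refine ⟨fun i => code (up i), fun i => congrArg code (up_dual i), fun i => ?_,
    fun i j hij hc => ?_⟩
  · have hlt : code (up i) < Fintype.card {j // d j = d (up i)} := Fin.isLt _
    rwa [deg_up, apply_ite (fun p => Fintype.card {j // d j = p}), card_dual, ite_self] at hlt
  · have hup := code_inj _ _ (by rw [deg_up, deg_up, hij]) hc
    simp only [up, hij] at hup
    split_ifs at hup
    exacts [hup, hσ.injective hup]

theorem exists_fiber_equiv_fin (hσ : Function.Involutive σ) (hd : ∀ i, d (σ i) = m - d i)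
    (hfix : ∀ i, 2 * d i = m → σ i = i) (n : ℤ → ℕ)
    (hn : ∀ p, Fintype.card {i // d i = p} = n p) :
    ∃ β : (p : ℤ) → Fin (n p) ≃ {i // d i = p},
      ∀ p q i j, σ (β p i) = β q j ↔ p = m - q ∧ (i : ℕ) = j := by
  obtain ⟨κ, hκσ, hκlt, hκinj⟩ := exists_fiber_code hσ hd hfix
  let f (p : ℤ) (i : {i // d i = p}) : Fin (n p) := ⟨κ i, by simpa [i.2, hn] using hκlt i⟩
  have hf (p : ℤ) : Function.Bijective (f p) :=
    (Fintype.bijective_iff_injective_and_card _).2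
      ⟨fun i j h => Subtype.ext (hκinj _ _ (i.2.trans j.2.symm) (Fin.ext_iff.1 h)), by simp [hn]⟩
  let β (p : ℤ) : Fin (n p) ≃ {i // d i = p} := (Equiv.ofBijective _ (hf p)).symm
  have hκβ (p : ℤ) (i : Fin (n p)) : κ (β p i) = i :=
    Fin.ext_iff.1 (Equiv.ofBijective_apply_symm_apply _ (hf p) i)
  refine ⟨β, fun p q i j => ⟨fun h => ⟨?_, ?_⟩, ?_⟩⟩
  · have := congrArg d h
    rw [hd, (β p i).2, (β q j).2] at this
    omega
  · rw [← hκβ p i, ← hκβ q j, ← h, hκσ]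
  · rintro ⟨rfl, hij⟩
    refine hκinj _ _ ?_ (by rw [hκσ, hκβ, hκβ, hij])
    rw [hd, (β _ i).2, (β q j).2]
    ring

end FiberCode

section

variable {H : Type*} [AddCommGroup H] [Module ℂ H] {F : ℤ → Submodule ℂ H} {m : ℤ}
  {S : H →ₗ[ℂ] H →ₗ[ℂ] ℂ}

theorem exists_hyperbolic_pair (hF : Antitone F) (hsymm : ∀ u v : H, S u v = (-1 : ℂ) ^ m * S v u)
    (hvan : ∀ p q : ℤ, p + q = m + 1 → ∀ u ∈ F p, ∀ v ∈ F q, S u v = 0)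
    {W : Submodule ℂ H} {t : ℤ} (ht : m < 2 * t) {u w : H} (hu : u ∈ F t ⊓ W)
    (hw : w ∈ F (m - t) ⊓ W) (huw : S u w ≠ 0) :
    ∃ u' ∈ F t ⊓ W, ∃ w' ∈ F (m - t) ⊓ W, S u' u' = 0 ∧ S u' w' = 1 ∧ S w' w' = 0 := by
  set u' := (S u w)⁻¹ • u
  have hu' : u' ∈ F t ⊓ W := smul_mem _ _ hu
  have hu'w : S u' w = 1 := by simp [u', inv_mul_cancel₀ huw]
  have hwu' : S w u' = (-1) ^ m := by rw [hsymm, hu'w, mul_one]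
  have hu'u' : S u' u' = 0 := hvan t (m + 1 - t) (by ring) _ hu'.1 _ (hF (by omega) hu'.1)
  -- `w` is corrected by a multiple of `u'` to become isotropic; for odd `m`, `S w w = 0` already
  refine ⟨u', hu', w - (S w w / 2) • u', sub_mem hw (smul_mem _ _ ⟨hF (by omega) hu'.1, hu'.2⟩),
    hu'u', by simp [hu'w, hu'u'], ?_⟩
  simp only [map_sub, map_smul, LinearMap.sub_apply, LinearMap.smul_apply, smul_eq_mul, hu'u', hu'w,
    hwu']
  linear_combination (1 / 2 : ℂ) * hsymm w w

theorem exists_pairing_self_eq_one (hsymm : ∀ u v : H, S u v = S v u) {K : Submodule ℂ H}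
    {u w : H} (hu : u ∈ K) (hw : w ∈ K) (huw : S u w ≠ 0) : ∃ x ∈ K, S x x = 1 := by
  obtain ⟨x, hx, hxx⟩ : ∃ x ∈ K, S x x ≠ 0 := by
    by_cases hu' : S u u = 0
    · by_cases hw' : S w w = 0
      · refine ⟨u + w, add_mem hu hw, ?_⟩
        simpa [hu', hw', hsymm w u, ← two_mul] using huw
      · exact ⟨w, hw, hw'⟩
    · exact ⟨u, hu, hu'⟩
  obtain ⟨c, hc⟩ := IsAlgClosed.exists_pow_nat_eq (S x x) two_pos
  have hc0 : c ≠ 0 := by rintro rfl; simp_all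
  refine ⟨c⁻¹ • x, smul_mem _ _ hx, ?_⟩
  simp only [map_smul, LinearMap.smul_apply, smul_eq_mul, ← hc]
  field_simp

end

/-- The upper member of a hyperbolic pair is normalised to pair to `1` with its partner, which then
pairs back to `(-1)^m`. -/
noncomputable def adaptedSign (m p : ℤ) : ℂ := if m ≤ 2 * p then 1 else (-1) ^ m

theorem adaptedSign_eq_one_or_neg_one (m p : ℤ) : adaptedSign m p = 1 ∨ adaptedSign m p = -1 := by
  unfold adaptedSign
  split_ifs
  · exact Or.inl rfl
  · rcases Int.even_or_odd m with h | h
    · exact Or.inl h.neg_one_zpow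
    · exact Or.inr h.neg_one_zpow

theorem adaptedSign_ne_zero (m p : ℤ) : adaptedSign m p ≠ 0 := by
  rcases adaptedSign_eq_one_or_neg_one m p with h | h <;> simp [h]

structure AdaptedFamily {H : Type*} [AddCommGroup H] [Module ℂ H] (F : ℤ → Submodule ℂ H) (m : ℤ)
    (S : H →ₗ[ℂ] H →ₗ[ℂ] ℂ) (ι : Type*) where
  vec : ι → H
  deg : ι → ℤ
  dual : ι → ι
  vec_mem : ∀ i, vec i ∈ F (deg i)
  deg_dual : ∀ i, deg (dual i) = m - deg i
  dual_involutive : Function.Involutive dual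
  dual_eq_self : ∀ i, 2 * deg i = m → dual i = i
  pairing_dual : ∀ i, S (vec i) (vec (dual i)) = adaptedSign m (deg i)
  pairing_of_ne : ∀ i j, dual i ≠ j → S (vec i) (vec j) = 0

namespace AdaptedFamily

variable {H : Type*} [AddCommGroup H] [Module ℂ H] {F : ℤ → Submodule ℂ H} {m : ℤ}
  {S : H →ₗ[ℂ] H →ₗ[ℂ] ℂ} {ι κ : Type*}

def orth (e : AdaptedFamily F m S ι) : Submodule ℂ H := ⨅ i, LinearMap.ker (S.flip (e.vec i))

theorem mem_orth (e : AdaptedFamily F m S ι) {y : H} : y ∈ e.orth ↔ ∀ i, S y (e.vec i) = 0 := by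
  simp [orth]

theorem sum_pairing (e : AdaptedFamily F m S ι) [Fintype ι] (c : ι → ℂ) (k : ι) :
    S (∑ i, c i • e.vec i) (e.vec k) = c (e.dual k) * adaptedSign m (e.deg (e.dual k)) := by
  simp only [map_sum, map_smul, LinearMap.sum_apply, LinearMap.smul_apply, smul_eq_mul]
  rw [Finset.sum_eq_single (e.dual k), ← e.pairing_dual, e.dual_involutive]
  · intro i _ hi
    rw [e.pairing_of_ne i k fun h => hi (by rw [← h, e.dual_involutive]), mul_zero]
  · simp

noncomputable def proj (e : AdaptedFamily F m S ι) [Fintype ι] (y : H) : H :=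
  ∑ i, (S y (e.vec (e.dual i)) / adaptedSign m (e.deg i)) • e.vec i

theorem sub_proj_mem_orth (e : AdaptedFamily F m S ι) [Fintype ι] (y : H) :
    y - e.proj y ∈ e.orth := by
  refine e.mem_orth.2 fun k => ?_
  rw [map_sub, LinearMap.sub_apply, proj, sum_pairing, e.dual_involutive,
    div_mul_cancel₀ _ (adaptedSign_ne_zero _ _), sub_self]

theorem pairing_proj_of_mem_orth (e : AdaptedFamily F m S ι) [Fintype ι] {y : H}
    (hy : y ∈ e.orth) (v : H) : S y (e.proj v) = 0 := by
  simp [proj, e.mem_orth.1 hy]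

theorem span_vec_le (e : AdaptedFamily F m S ι) (hF : Antitone F) (p : ℤ) :
    span ℂ (e.vec '' {i | p ≤ e.deg i}) ≤ F p := by
  rw [span_le]
  rintro _ ⟨i, hi, rfl⟩
  exact hF hi (e.vec_mem i)

theorem proj_mem_span (e : AdaptedFamily F m S ι) [Fintype ι] (hF : Antitone F)
    (hvan : ∀ p q : ℤ, p + q = m + 1 → ∀ u ∈ F p, ∀ v ∈ F q, S u v = 0) {p : ℤ} {y : H}
    (hy : y ∈ F p) : e.proj y ∈ span ℂ (e.vec '' {i | p ≤ e.deg i}) := by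
  refine sum_mem fun i _ => ?_
  by_cases hi : p ≤ e.deg i
  · exact smul_mem _ _ (subset_span ⟨i, hi, rfl⟩)
  · have hdual := e.vec_mem (e.dual i)
    rw [e.deg_dual] at hdual
    rw [hvan (e.deg i + 1) _ (by ring) y (hF (by omega) hy) _ hdual, zero_div, zero_smul]
    exact zero_mem _

theorem proj_mem (e : AdaptedFamily F m S ι) [Fintype ι] (hF : Antitone F)
    (hvan : ∀ p q : ℤ, p + q = m + 1 → ∀ u ∈ F p, ∀ v ∈ F q, S u v = 0) {p : ℤ} {y : H}
    (hy : y ∈ F p) : e.proj y ∈ F p :=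
  e.span_vec_le hF p (e.proj_mem_span hF hvan hy)

theorem span_eq_of_inf_orth_eq_bot (e : AdaptedFamily F m S ι) [Fintype ι] (hF : Antitone F)
    (hvan : ∀ p q : ℤ, p + q = m + 1 → ∀ u ∈ F p, ∀ v ∈ F q, S u v = 0) {p : ℤ}
    (h : F p ⊓ e.orth = ⊥) : span ℂ (e.vec '' {i | p ≤ e.deg i}) = F p := by
  refine le_antisymm (e.span_vec_le hF p) fun y hy => ?_
  have hres : y - e.proj y ∈ F p ⊓ e.orth :=
    ⟨sub_mem hy (e.proj_mem hF hvan hy), e.sub_proj_mem_orth y⟩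
  rw [h, mem_bot, sub_eq_zero] at hres
  exact hres ▸ e.proj_mem_span hF hvan hy

theorem linearIndependent_mkQ (e : AdaptedFamily F m S ι) [Fintype ι]
    (hvan : ∀ p q : ℤ, p + q = m + 1 → ∀ u ∈ F p, ∀ v ∈ F q, S u v = 0) (p : ℤ) :
    LinearIndependent ℂ fun i : {i // e.deg i = p} => (F (p + 1)).mkQ (e.vec i) := by
  refine Fintype.linearIndependent_iff.2 fun c hc j => ?_
  have hy : ∑ i, c i • e.vec i.1 ∈ F (p + 1) := by
    rw [← Submodule.Quotient.mk_eq_zero, ← mkQ_apply, map_sum]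
    simpa using hc
  have hdual : e.vec (e.dual j) ∈ F (m - p) := by
    simpa [e.deg_dual, j.2] using e.vec_mem (e.dual j)
  have h0 := hvan _ _ (by ring) _ hy _ hdual
  rw [map_sum, LinearMap.sum_apply, Finset.sum_eq_single j] at h0
  · simpa [e.pairing_dual, adaptedSign_ne_zero] using h0
  · intro i _ hij
    rw [map_smul, LinearMap.smul_apply,
      e.pairing_of_ne _ _ fun h => hij (Subtype.ext (e.dual_involutive.injective h)), smul_zero]
  · simp

theorem span_range_mkQ (e : AdaptedFamily F m S ι) (hF : Antitone F) {p : ℤ}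
    (hspan : span ℂ (e.vec '' {i | p ≤ e.deg i}) = F p) :
    span ℂ (Set.range fun i : {i // e.deg i = p} => (F (p + 1)).mkQ (e.vec i)) =
      (F p).map (F (p + 1)).mkQ := by
  rw [← hspan, map_span]
  refine le_antisymm (span_mono ?_) (span_le.2 ?_)
  · rintro _ ⟨i, rfl⟩
    exact ⟨e.vec i, ⟨i, i.2.ge, rfl⟩, rfl⟩
  · rintro _ ⟨_, ⟨i, hi, rfl⟩, rfl⟩
    rcases (show p ≤ e.deg i from hi).eq_or_lt with h | h
    · exact subset_span ⟨⟨i, h.symm⟩, rfl⟩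
    · rw [SetLike.mem_coe, mkQ_apply,
        (Submodule.Quotient.mk_eq_zero _).2 (hF (show p + 1 ≤ e.deg i by omega) (e.vec_mem i))]
      exact zero_mem _

def empty : AdaptedFamily F m S Empty where
  vec := nofun
  deg := nofun
  dual := nofun
  vec_mem := nofun
  deg_dual := nofun
  dual_involutive := nofun
  dual_eq_self := nofun
  pairing_dual := nofun
  pairing_of_ne := nofun

def append (e : AdaptedFamily F m S ι) (g : AdaptedFamily F m S κ)
    (hsymm : ∀ u v : H, S u v = (-1 : ℂ) ^ m * S v u) (hg : ∀ k, g.vec k ∈ e.orth) :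
    AdaptedFamily F m S (ι ⊕ κ) where
  vec := Sum.elim e.vec g.vec
  deg := Sum.elim e.deg g.deg
  dual := Sum.map e.dual g.dual
  vec_mem := by rintro (i | k) <;> simp [e.vec_mem, g.vec_mem]
  deg_dual := by rintro (i | k) <;> simp [e.deg_dual, g.deg_dual]
  dual_involutive := by rintro (i | k) <;> simp [e.dual_involutive _, g.dual_involutive _]
  dual_eq_self := by rintro (i | k) h <;> simp_all [e.dual_eq_self, g.dual_eq_self]
  pairing_dual := by rintro (i | k) <;> simp [e.pairing_dual, g.pairing_dual]
  pairing_of_ne := by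
    rintro (i | k) (j | l) h
    · exact e.pairing_of_ne i j fun h' => h (by simp [h'])
    · exact (hsymm _ _).trans (by simp [e.mem_orth.1 (hg l) i])
    · exact e.mem_orth.1 (hg k) j
    · exact g.pairing_of_ne k l fun h' => h (by simp [h'])

theorem orth_append (e : AdaptedFamily F m S ι) (g : AdaptedFamily F m S κ)
    (hsymm : ∀ u v : H, S u v = (-1 : ℂ) ^ m * S v u) (hg : ∀ k, g.vec k ∈ e.orth) :
    (e.append g hsymm hg).orth = e.orth ⊓ g.orth :=
  iInf_sum

theorem inf_orth_lt (g : AdaptedFamily F m S κ) [Nonempty κ] {W : Submodule ℂ H}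
    (hg : ∀ k, g.vec k ∈ W) : W ⊓ g.orth < W := by
  obtain ⟨k⟩ := ‹Nonempty κ›
  refine inf_lt_left.2 fun hle => adaptedSign_ne_zero m (g.deg k) ?_
  rw [← g.pairing_dual]
  exact g.mem_orth.1 (hle (hg k)) _

def pair {t : ℤ} {u w : H} (ht : m < 2 * t) (hu : u ∈ F t) (hw : w ∈ F (m - t))
    (huu : S u u = 0) (huw : S u w = 1) (hwu : S w u = (-1) ^ m) (hww : S w w = 0) :
    AdaptedFamily F m S Bool where
  vec b := cond b w u
  deg b := cond b (m - t) t
  dual := not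
  vec_mem := by rintro (_ | _) <;> assumption
  deg_dual := by rintro (_ | _) <;> simp
  dual_involutive := Bool.not_not
  dual_eq_self := by rintro (_ | _) h <;> simp at h <;> omega
  pairing_dual := by
    rintro (_ | _)
    · simpa [adaptedSign, ht.le] using huw
    · simpa [adaptedSign, show ¬m ≤ 2 * (m - t) by omega] using hwu
  pairing_of_ne := by rintro (_ | _) (_ | _) h <;> simp_all

def single {t : ℤ} {x : H} (ht : 2 * t = m) (hx : x ∈ F t) (hxx : S x x = 1) :
    AdaptedFamily F m S Unit where
  vec _ := x
  deg _ := t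
  dual := id
  vec_mem _ := hx
  deg_dual _ := by omega
  dual_involutive _ := rfl
  dual_eq_self _ _ := rfl
  pairing_dual _ := by simpa [adaptedSign, ht.ge] using hxx
  pairing_of_ne _ _ h := absurd rfl h

theorem exists_of_pairing_ne_zero (hF : Antitone F)
    (hsymm : ∀ u v : H, S u v = (-1 : ℂ) ^ m * S v u)
    (hvan : ∀ p q : ℤ, p + q = m + 1 → ∀ u ∈ F p, ∀ v ∈ F q, S u v = 0)
    {W : Submodule ℂ H} {t : ℤ} (ht : m ≤ 2 * t) {u w : H} (hu : u ∈ F t ⊓ W)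
    (hw : w ∈ F (m - t) ⊓ W) (huw : S u w ≠ 0) :
    ∃ (κ : Type) (_ : Fintype κ) (_ : Nonempty κ) (g : AdaptedFamily F m S κ),
      ∀ k, g.vec k ∈ W := by
  rcases ht.lt_or_eq with ht | ht
  · obtain ⟨u', hu', w', hw', hu'u', hu'w', hw'w'⟩ :=
      exists_hyperbolic_pair hF hsymm hvan ht hu hw huw
    have hw'u' : S w' u' = (-1) ^ m := by rw [hsymm, hu'w', mul_one]
    exact ⟨Bool, inferInstance, ⟨true⟩, .pair ht hu'.1 hw'.1 hu'u' hu'w' hw'u' hw'w',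
      by rintro (_ | _); exacts [hu'.2, hw'.2]⟩
  · have hm : (-1 : ℂ) ^ m = 1 := Even.neg_one_zpow ⟨t, by omega⟩
    obtain ⟨x, hx, hxx⟩ := exists_pairing_self_eq_one (fun u v => by rw [hsymm, hm, one_mul])
      hu (show w ∈ F t ⊓ W by rwa [show t = m - t by omega]) huw
    exact ⟨Unit, inferInstance, ⟨()⟩, .single ht.symm hx.1 hxx, fun _ => hx.2⟩

theorem exists_pairing_ne_zero (e : AdaptedFamily F m S ι) [Fintype ι] (hF : Antitone F)
    (hvan : ∀ p q : ℤ, p + q = m + 1 → ∀ u ∈ F p, ∀ v ∈ F q, S u v = 0)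
    (hndl : ∀ p : ℤ, ∀ u ∈ F p, (∀ v ∈ F (m - p), S u v = 0) → u ∈ F (p + 1))
    {t : ℤ} {u : H} (hu : u ∈ F t ⊓ e.orth) (hu0 : u ≠ 0) (htop : F (t + 1) ⊓ e.orth = ⊥) :
    ∃ w ∈ F (m - t) ⊓ e.orth, S u w ≠ 0 := by
  by_contra! h
  refine hu0 ((mem_bot ℂ).1 (htop ▸ ⟨hndl t u hu.1 fun v hv => ?_, hu.2⟩))
  have hsplit := h _ ⟨sub_mem hv (e.proj_mem hF hvan hv), e.sub_proj_mem_orth v⟩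
  rwa [map_sub, e.pairing_proj_of_mem_orth hu.2, sub_zero] at hsplit

theorem exists_extension (e : AdaptedFamily F m S ι) [Fintype ι] (hF : Antitone F)
    (hfin : ∃ b : ℤ, F b = ⊥) (hsymm : ∀ u v : H, S u v = (-1 : ℂ) ^ m * S v u)
    (hvan : ∀ p q : ℤ, p + q = m + 1 → ∀ u ∈ F p, ∀ v ∈ F q, S u v = 0)
    (hndl : ∀ p : ℤ, ∀ u ∈ F p, (∀ v ∈ F (m - p), S u v = 0) → u ∈ F (p + 1))
    (h : ∃ p, F p ⊓ e.orth ≠ ⊥) :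
    ∃ (κ : Type) (_ : Fintype κ) (_ : Nonempty κ) (g : AdaptedFamily F m S κ),
      ∀ k, g.vec k ∈ e.orth := by
  obtain ⟨t, ht, htop⟩ := Antitone.exists_ne_bot_succ_eq_bot
    (G := fun p => F p ⊓ e.orth) (fun _ _ hpq => inf_le_inf_right _ (hF hpq))
    (by obtain ⟨b, hb⟩ := hfin; exact ⟨b, by simp [hb]⟩) h
  obtain ⟨u, hu, hu0⟩ := (Submodule.ne_bot_iff _).1 ht
  obtain ⟨w, hw, huw⟩ := e.exists_pairing_ne_zero hF hvan hndl hu hu0 htop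
  have hmt : m ≤ 2 * t := by
    by_contra hlt
    have hw0 : w ∈ F (t + 1) ⊓ e.orth := ⟨hF (by omega) hw.1, hw.2⟩
    rw [htop, mem_bot] at hw0
    exact huw (by simp [hw0])
  exact exists_of_pairing_ne_zero hF hsymm hvan hmt hu hw huw

theorem exists_inf_orth_eq_bot [FiniteDimensional ℂ H] (hF : Antitone F)
    (hfin : ∃ b : ℤ, F b = ⊥) (hsymm : ∀ u v : H, S u v = (-1 : ℂ) ^ m * S v u)
    (hvan : ∀ p q : ℤ, p + q = m + 1 → ∀ u ∈ F p, ∀ v ∈ F q, S u v = 0)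
    (hndl : ∀ p : ℤ, ∀ u ∈ F p, (∀ v ∈ F (m - p), S u v = 0) → u ∈ F (p + 1)) :
    ∃ (ι : Type) (_ : Fintype ι) (e : AdaptedFamily F m S ι), ∀ p, F p ⊓ e.orth = ⊥ := by
  suffices ∀ n (ι : Type) [Fintype ι] (e : AdaptedFamily F m S ι), finrank ℂ e.orth < n →
      ∃ (ι : Type) (_ : Fintype ι) (e : AdaptedFamily F m S ι), ∀ p, F p ⊓ e.orth = ⊥ from
    this _ Empty .empty (Nat.lt_succ_self _)
  intro n
  induction n with
  | zero => intros; omega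
  | succ n ih =>
    intro ι _ e hn
    by_cases h : ∀ p, F p ⊓ e.orth = ⊥
    · exact ⟨ι, inferInstance, e, h⟩
    obtain ⟨κ, _, _, g, hg⟩ := e.exists_extension hF hfin hsymm hvan hndl (not_forall.1 h)
    refine ih _ (e.append g hsymm hg) ?_
    have := Submodule.finrank_lt_finrank_of_lt (g.inf_orth_lt hg)
    rw [orth_append]
    omega

end AdaptedFamily

theorem stmt_2_general (H : Type) [AddCommGroup H] [Module ℂ H] [FiniteDimensional ℂ H]
    (F : ℤ → Submodule ℂ H) (hF : ∀ p q : ℤ, p ≤ q → F q ≤ F p)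
    (hfin : ∃ b : ℤ, F b = ⊥)
    (m : ℤ) (S : H →ₗ[ℂ] H →ₗ[ℂ] ℂ)
    (hsymm : ∀ u v : H, S u v = (-1 : ℂ) ^ m * S v u)
    (hvan : ∀ p q : ℤ, p + q = m + 1 → ∀ u ∈ F p, ∀ v ∈ F q, S u v = 0)
    (hndl : ∀ p : ℤ, ∀ u ∈ F p, (∀ v ∈ F (m - p), S u v = 0) → u ∈ F (p + 1)) :
    ∃ ε : ℤ → ℂ, (∀ p, ε p = 1 ∨ ε p = -1) ∧
      ∃ v : (p : ℤ) → Fin (Module.finrank ℂ ((F p).map (F (p + 1)).mkQ)) → H,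
        (∀ p i, v p i ∈ F p) ∧
        (∀ p, LinearIndependent ℂ (fun i => (F (p + 1)).mkQ (v p i)) ∧
          Submodule.span ℂ (Set.range fun i => (F (p + 1)).mkQ (v p i)) =
            (F p).map (F (p + 1)).mkQ) ∧
        (∀ p q i j, S (v p i) (v q j) =
          if p = m - q ∧ (i : ℕ) = (j : ℕ) then ε p else 0) := by
  have hF' : Antitone F := fun p q h => hF p q h
  obtain ⟨ι, _, e, he⟩ := AdaptedFamily.exists_inf_orth_eq_bot hF' hfin hsymm hvan hndl
  have hspan (p : ℤ) := e.span_range_mkQ hF' (e.span_eq_of_inf_orth_eq_bot hF' hvan (he p))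
  obtain ⟨β, hβ⟩ := exists_fiber_equiv_fin e.dual_involutive e.deg_dual e.dual_eq_self
    (fun p => finrank ℂ ((F p).map (F (p + 1)).mkQ))
    fun p => by rw [← hspan p, finrank_span_eq_card (e.linearIndependent_mkQ hvan p)]
  refine ⟨adaptedSign m, adaptedSign_eq_one_or_neg_one m, fun p i => e.vec (β p i),
    fun p i => by simpa [(β p i).2] using e.vec_mem (β p i),
    fun p => ⟨(e.linearIndependent_mkQ hvan p).comp _ (β p).injective, ?_⟩, fun p q i j => ?_⟩
  · exact (congrArg _ (EquivLike.range_comp _ (β p))).trans (hspan p)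
  · dsimp only
    by_cases h : e.dual (β p i) = β q j
    · rw [if_pos ((hβ p q i j).1 h), ← h, e.pairing_dual, (β p i).2]
    · rw [if_neg (mt (hβ p q i j).2 h), e.pairing_of_ne _ _ h]

/-- Lemma 3.4: existence of an `S`-adapted lifted basis: elements
`v p i ∈ F^p H` whose classes form bases of the graded pieces and with
`S (v p i) (v q j) = ε_p δ_{p, m-q} δ_{i,j}`, `ε_p = ±1`. -/
theorem stmt_2 (H : Type) [AddCommGroup H] [Module ℂ H] [FiniteDimensional ℂ H]
    (F : ℤ → Submodule ℂ H) (hF : ∀ p q : ℤ, p ≤ q → F q ≤ F p)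
    (hexh : ∃ a : ℤ, F a = ⊤) (hfin : ∃ b : ℤ, F b = ⊥)
    (m : ℤ) (S : H →ₗ[ℂ] H →ₗ[ℂ] ℂ)
    (hsymm : ∀ u v : H, S u v = (-1 : ℂ) ^ m * S v u)
    (hvan : ∀ p q : ℤ, p + q = m + 1 → ∀ u ∈ F p, ∀ v ∈ F q, S u v = 0)
    (hndl : ∀ p : ℤ, ∀ u ∈ F p, (∀ v ∈ F (m - p), S u v = 0) → u ∈ F (p + 1))
    (hndr : ∀ p : ℤ, ∀ v ∈ F (m - p), (∀ u ∈ F p, S u v = 0) → v ∈ F (m - p + 1)) :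
    ∃ ε : ℤ → ℂ, (∀ p, ε p = 1 ∨ ε p = -1) ∧
      ∃ v : (p : ℤ) → Fin (Module.finrank ℂ ((F p).map (F (p + 1)).mkQ)) → H,
        (∀ p i, v p i ∈ F p) ∧
        (∀ p, LinearIndependent ℂ (fun i => (F (p + 1)).mkQ (v p i)) ∧
          Submodule.span ℂ (Set.range fun i => (F (p + 1)).mkQ (v p i)) =
            (F p).map (F (p + 1)).mkQ) ∧
        (∀ p q i j, S (v p i) (v q j) =
          if p = m - q ∧ (i : ℕ) = (j : ℕ) then ε p else 0) :=
  stmt_2_general H F hF hfin m S hsymm hvan hndl
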